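/- Let (G, k) be an instance of Vertex Cover where G is a 2-connected cubic graph, and let G' be obtained from G by subdividing every edge twice. Then G' has a vertex cover of size at most k + |E(G)| if and only if G has a vertex cover of size at most k. -/

import Mathlib

open scoped Classical

/-- The subdivision vertices of `G`: one vertex `w (u,v)` for each ordered adjacent
pair, so each edge `{u,v}` gets the two internal vertices `w (u,v)` and `w (v,u)`. -/
abbrev SubVert {V0 : Type*} (G : SimpleGraph V0) := {p : V0 × V0 // G.Adj p.1 p.2}

/-- The adjacency relation of the graph obtained from `G` by subdividing every edge
twice: each edge `{u,v}` is replaced by the path `u - w(u,v) - w(v,u) - v`. -/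
def subAdj {V0 : Type*} (G : SimpleGraph V0) :
    (V0 ⊕ SubVert G) → (V0 ⊕ SubVert G) → Prop
  | Sum.inl u, Sum.inr q => u = q.1.1
  | Sum.inr q, Sum.inl u => u = q.1.1
  | Sum.inr q, Sum.inr q' => q.1.1 = q'.1.2 ∧ q.1.2 = q'.1.1
  | Sum.inl _, Sum.inl _ => False

/-- The graph obtained from `G` by subdividing every edge twice. -/
def subdivide {V0 : Type*} (G : SimpleGraph V0) : SimpleGraph (V0 ⊕ SubVert G) where
  Adj := subAdj G
  symm := by
    refine ⟨?_⟩
    rintro (u | q) (w | q') h <;> simp only [subAdj] at h ⊢ <;> tauto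
  loopless := by
    refine ⟨?_⟩
    rintro (u | q) h <;> simp only [subAdj] at h
    exact G.loopless.irrefl q.1.1 (h.2 ▸ q.2)

/-- `G` is 2-vertex-connected: more than 2 vertices and deleting any vertex leaves a
connected graph. -/
def TwoVertexConnected {V0 : Type*} [Fintype V0] (G : SimpleGraph V0) : Prop :=
  2 < Fintype.card V0 ∧ ∀ v : V0, (G.induce {u | u ≠ v}).Connected


/-- `S` is a vertex cover of `G`. -/
def IsVC {W : Type*} (G : SimpleGraph W) (S : Finset W) : Prop :=
  ∀ u v : W, G.Adj u v → u ∈ S ∨ v ∈ S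

/-!
A cover `S'` of the double subdivision must contain an internal vertex of every edge path
`u - w(u,v) - w(v,u) - v`, and both of them when neither `u` nor `v` lies in `S'`; so dropping the
internal vertices and adding one endpoint of each such doubly paid edge yields a cover of `G`
with at most `|S'| - |E(G)|` vertices. Conversely, a cover of `G` together with one well-chosen
internal vertex per edge covers the subdivision.
-/

section

open Finset

variable {V : Type*} {G : SimpleGraph V}

def SubVert.rev (q : SubVert G) : SubVert G := ⟨q.1.swap, q.2.symm⟩

def SubVert.edge (q : SubVert G) : Sym2 V := s(q.1.1, q.1.2)

lemma subdivide_adj_inl_inr {u : V} {q : SubVert G} :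
    (subdivide G).Adj (.inl u) (.inr q) ↔ u = q.1.1 := Iff.rfl

lemma subdivide_adj_inr_inr {q q' : SubVert G} :
    (subdivide G).Adj (.inr q) (.inr q') ↔ q' = q.rev := by
  obtain ⟨⟨a, b⟩, h⟩ := q
  obtain ⟨⟨c, d⟩, h'⟩ := q'
  simp [subdivide, subAdj, SubVert.rev, eq_comm, and_comm]

lemma IsVC.inr_mem_or_inr_rev_mem {S' : Finset (V ⊕ SubVert G)} (hS' : IsVC (subdivide G) S')
    (q : SubVert G) : .inr q ∈ S' ∨ .inr q.rev ∈ S' :=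
  hS' _ _ (subdivide_adj_inr_inr.2 rfl)

lemma IsVC.inr_mem_and_inr_rev_mem {S' : Finset (V ⊕ SubVert G)} (hS' : IsVC (subdivide G) S')
    {q : SubVert G} (h₁ : .inl q.1.1 ∉ S') (h₂ : .inl q.1.2 ∉ S') :
    .inr q ∈ S' ∧ .inr q.rev ∈ S' :=
  ⟨(hS' _ _ (subdivide_adj_inl_inr.2 rfl)).resolve_left h₁,
    (hS' _ _ (subdivide_adj_inl_inr.2 rfl)).resolve_left h₂⟩

section Finite

variable [Fintype V]

noncomputable def uncoveredEdges (G : SimpleGraph V) (A : Finset V) : Finset (Sym2 V) :=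
  {e ∈ G.edgeFinset | ∀ v ∈ e, v ∉ A}

lemma exists_isVC_card_le_card_add_card_uncoveredEdges (A : Finset V) :
    ∃ S, IsVC G S ∧ #S ≤ #A + #(uncoveredEdges G A) := by
  refine ⟨A ∪ (uncoveredEdges G A).image (fun e => e.out.1), fun u v huv => ?_,
    (card_union_le _ _).trans (by gcongr; exact card_image_le)⟩
  by_cases hA : u ∈ A ∨ v ∈ A
  · rcases hA with h | h <;> simp [h]
  have he : s(u, v) ∈ uncoveredEdges G A := by
    obtain ⟨hu, hv⟩ := not_or.1 hA
    simpa [uncoveredEdges, hu, hv] using huv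
  have hout : s(u, v).out.1 ∈ A ∪ (uncoveredEdges G A).image (fun e => e.out.1) :=
    mem_union_right _ (mem_image_of_mem _ he)
  rcases Sym2.mem_iff.1 (Sym2.out_fst_mem s(u, v)) with h | h <;> rw [h] at hout <;> simp [hout]

lemma IsVC.one_add_le_card_fiber {S' : Finset (V ⊕ SubVert G)} (hS' : IsVC (subdivide G) S')
    {e : Sym2 V} (he : e ∈ G.edgeFinset) :
    1 + (if ∀ v ∈ e, v ∉ S'.toLeft then 1 else 0) ≤ #{q ∈ S'.toRight | q.edge = e} := by
  induction e using Sym2.ind with | _ u v => ?_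
  have huv : G.Adj u v := G.mem_edgeFinset.1 he
  set q : SubVert G := ⟨(u, v), huv⟩
  have hq : .inr q ∈ S' → q ∈ {q ∈ S'.toRight | q.edge = s(u, v)} := by
    simp [q, SubVert.edge]
  have hq_rev : .inr q.rev ∈ S' → q.rev ∈ {q ∈ S'.toRight | q.edge = s(u, v)} := by
    simp [q, SubVert.rev, SubVert.edge]
  split_ifs with hA
  · obtain ⟨h, h_rev⟩ := hS'.inr_mem_and_inr_rev_mem (q := q) (by simpa using hA u (by simp))
      (by simpa using hA v (by simp))
    have hne : q ≠ q.rev := fun h => huv.ne (congrArg (·.1.1) h)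
    exact one_lt_card.2 ⟨q, hq h, q.rev, hq_rev h_rev, hne⟩
  · rcases hS'.inr_mem_or_inr_rev_mem q with h | h
    · exact card_pos.2 ⟨q, hq h⟩
    · exact card_pos.2 ⟨q.rev, hq_rev h⟩

lemma IsVC.card_toLeft_add_card_uncoveredEdges_add_card_edgeFinset_le
    {S' : Finset (V ⊕ SubVert G)} (hS' : IsVC (subdivide G) S') :
    #S'.toLeft + #(uncoveredEdges G S'.toLeft) + #G.edgeFinset ≤ #S' := by
  have h_edge : ∀ q ∈ S'.toRight, q.edge ∈ G.edgeFinset := fun q _ => G.mem_edgeFinset.2 q.2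
  calc #S'.toLeft + #(uncoveredEdges G S'.toLeft) + #G.edgeFinset
      = #S'.toLeft + ∑ e ∈ G.edgeFinset, (1 + if ∀ v ∈ e, v ∉ S'.toLeft then 1 else 0) := by
        rw [sum_add_distrib, ← card_filter, uncoveredEdges, card_eq_sum_ones G.edgeFinset]
        ring
    _ ≤ #S'.toLeft + ∑ e ∈ G.edgeFinset, #{q ∈ S'.toRight | q.edge = e} := by
        gcongr with e he
        exact hS'.one_add_le_card_fiber he
    _ = #S' := by rw [← card_eq_sum_card_fiberwise h_edge, card_toLeft_add_card_toRight]

section LinearOrder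

variable [LinearOrder V]

/-- On the path `u - w(u,v) - w(v,u) - v` of an edge with `v ∈ S` take `w(u,v)`, the internal
vertex next to `u`; when `u ∈ S` as well, the order on `V` decides which of the two is taken. -/
noncomputable def subdivCover (G : SimpleGraph V) (S : Finset V) : Finset (V ⊕ SubVert G) :=
  S.disjSum {q | q.1.2 ∈ S ∧ (q.1.1 ∈ S → q.1.1 < q.1.2)}

lemma isVC_subdivCover {S : Finset V} (hS : IsVC G S) : IsVC (subdivide G) (subdivCover G S) := by
  have h_inl : ∀ (u : V) (q : SubVert G), (subdivide G).Adj (.inl u) (.inr q) →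
      .inl u ∈ subdivCover G S ∨ .inr q ∈ subdivCover G S := by
    rintro u q rfl
    have := hS _ _ q.2
    simp [subdivCover]
    tauto
  rintro (u | q) (v | q') h
  · exact h.elim
  · exact h_inl u q' h
  · exact (h_inl v q h.symm).symm
  · obtain rfl := subdivide_adj_inr_inr.1 h
    have := hS _ _ q.2
    have := lt_or_gt_of_ne (G.ne_of_adj q.2)
    simp [subdivCover, SubVert.rev]
    tauto

lemma card_subdivCover_le (S : Finset V) : #(subdivCover G S) ≤ #S + #G.edgeFinset := by
  rw [subdivCover, card_disjSum]
  gcongr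
  refine card_le_card_of_injOn SubVert.edge (fun q _ => G.mem_edgeFinset.2 q.2) ?_
  rintro ⟨⟨a, b⟩, hab⟩ hq ⟨⟨c, d⟩, hcd⟩ hq' h
  simp only [coe_filter, mem_univ, true_and] at hq hq'
  rcases Sym2.eq_iff.1 h with ⟨rfl, rfl⟩ | ⟨rfl, rfl⟩
  · rfl
  · exact absurd ((hq.2 hq'.1).trans (hq'.2 hq.1)) (lt_irrefl _)

end LinearOrder

end Finite

end

theorem stmt_7_general {V0 : Type*} [Fintype V0] (G0 : SimpleGraph V0) (k : ℕ) :
    (∃ S' : Finset (V0 ⊕ SubVert G0),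
        IsVC (subdivide G0) S' ∧ S'.card ≤ k + G0.edgeFinset.card) ↔
      (∃ S : Finset V0, IsVC G0 S ∧ S.card ≤ k) := by
  constructor
  · rintro ⟨S', hS', hcard⟩
    obtain ⟨S, hS, hS_card⟩ :=
      exists_isVC_card_le_card_add_card_uncoveredEdges (G := G0) S'.toLeft
    have := hS'.card_toLeft_add_card_uncoveredEdges_add_card_edgeFinset_le
    exact ⟨S, hS, by omega⟩
  · rintro ⟨S, hS, hcard⟩
    let : LinearOrder V0 := LinearOrder.lift' _ (Fintype.equivFin V0).injective
    exact ⟨subdivCover G0 S, isVC_subdivCover hS, (card_subdivCover_le S).trans (by omega)⟩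

/-- For a 2-connected cubic graph `G` and its double subdivision `G'`: `G'` has a
vertex cover of size at most `k + |E(G)|` iff `G` has a vertex cover of size at
most `k`. -/
theorem stmt_7 {V0 : Type*} [Fintype V0] (G0 : SimpleGraph V0)
    (hcubic : ∀ v : V0, G0.degree v = 3) (h2c : TwoVertexConnected G0) (k : ℕ) :
    (∃ S' : Finset (V0 ⊕ SubVert G0),
        IsVC (subdivide G0) S' ∧ S'.card ≤ k + G0.edgeFinset.card) ↔
      (∃ S : Finset V0, IsVC G0 S ∧ S.card ≤ k) :=
  stmt_7_general G0 k
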